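/- If a linear operator T : M_{n,m}(ℝ) → M_{n,m}(ℝ) strongly preserves matrix majorization, then T strongly preserves gw-majorization. -/

import Mathlib

open Matrix

/-!
A g-row stochastic matrix `R` is an affine combination `(1 + t) S - t E` of two row stochastic
matrices, so `X ≻_gw Y` says exactly that `Y` is such an affine combination of two matrices
majorized by `X`. Any linear map preserving matrix majorization therefore preserves
gw-majorization. Strong preservation also makes `T` injective (only `0` is majorized by `0`),
hence invertible, and its inverse again preserves matrix majorization, which gives the converse.
-/

def GRowStochastic {n : ℕ} (R : Matrix (Fin n) (Fin n) ℝ) : Prop :=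
  R *ᵥ (1 : Fin n → ℝ) = 1

def RowStochastic {n : ℕ} (R : Matrix (Fin n) (Fin n) ℝ) : Prop :=
  (∀ i j, 0 ≤ R i j) ∧ R *ᵥ (1 : Fin n → ℝ) = 1

def GwMaj {n m : ℕ} (X Y : Matrix (Fin n) (Fin m) ℝ) : Prop :=
  ∃ R : Matrix (Fin n) (Fin n) ℝ, GRowStochastic R ∧ Y = R * X

def MatMaj {n m : ℕ} (X Y : Matrix (Fin n) (Fin m) ℝ) : Prop :=
  ∃ R : Matrix (Fin n) (Fin n) ℝ, RowStochastic R ∧ Y = R * X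

noncomputable def uniformStochastic (n : ℕ) : Matrix (Fin n) (Fin n) ℝ :=
  of fun _ _ => (n : ℝ)⁻¹

lemma rowStochastic_uniformStochastic (n : ℕ) : RowStochastic (uniformStochastic n) := by
  refine ⟨fun _ _ => by simp [uniformStochastic], ?_⟩
  funext i
  have hn : (n : ℝ) ≠ 0 := Nat.cast_ne_zero.2 i.pos.ne'
  simp [uniformStochastic, mulVec, dotProduct, hn]

lemma RowStochastic.gRowStochastic {n : ℕ} {R : Matrix (Fin n) (Fin n) ℝ}
    (hR : RowStochastic R) : GRowStochastic R :=
  hR.2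

lemma GRowStochastic.one_add_smul_sub_smul {n : ℕ} {S E : Matrix (Fin n) (Fin n) ℝ}
    (hS : GRowStochastic S) (hE : GRowStochastic E) (t : ℝ) :
    GRowStochastic ((1 + t) • S - t • E) := by
  unfold GRowStochastic at *
  rw [sub_mulVec, smul_mulVec, smul_mulVec, hS, hE]
  module

/-- Shifting the entries of `R` up by `c ≥ max |R i j|` and renormalising makes it row
stochastic. -/
lemma GRowStochastic.exists_rowStochastic_eq_one_add_smul_sub_smul {n : ℕ}
    {R : Matrix (Fin n) (Fin n) ℝ} (hR : GRowStochastic R) :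
    ∃ (t : ℝ) (S E : Matrix (Fin n) (Fin n) ℝ),
      RowStochastic S ∧ RowStochastic E ∧ R = (1 + t) • S - t • E := by
  set c := ∑ i, ∑ j, |R i j|
  have hc : ∀ i j, |R i j| ≤ c := fun i j =>
    (Finset.single_le_sum (fun j _ => abs_nonneg (R i j)) (Finset.mem_univ j)).trans
      (Finset.single_le_sum (f := fun i => ∑ j, |R i j|)
        (fun _ _ => Finset.sum_nonneg fun _ _ => abs_nonneg _) (Finset.mem_univ i))
  have hc0 : 0 ≤ c := Finset.sum_nonneg fun _ _ => Finset.sum_nonneg fun _ _ => abs_nonneg _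
  set t : ℝ := n * c
  have ht : 1 + t ≠ 0 := by positivity
  have hE := rowStochastic_uniformStochastic n
  refine ⟨t, (1 + t)⁻¹ • (R + t • uniformStochastic n), _, ⟨fun i j => ?_, ?_⟩, hE, ?_⟩
  · have hn : (n : ℝ) ≠ 0 := Nat.cast_ne_zero.2 i.pos.ne'
    have hshift : t * (n : ℝ)⁻¹ = c := by
      rw [mul_right_comm, mul_inv_cancel₀ hn, one_mul]
    simp only [Matrix.smul_apply, Matrix.add_apply, uniformStochastic, of_apply, smul_eq_mul,
      hshift]
    exact mul_nonneg (by positivity) (by linarith [neg_abs_le (R i j), hc i j])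
  · rw [smul_mulVec, add_mulVec, smul_mulVec, hR, hE.2,
      show (1 : Fin n → ℝ) + t • 1 = (1 + t) • 1 by module, smul_smul, inv_mul_cancel₀ ht,
      one_smul]
  · rw [smul_smul, mul_inv_cancel₀ ht, one_smul, add_sub_cancel_right]

lemma MatMaj.refl {n m : ℕ} (X : Matrix (Fin n) (Fin m) ℝ) : MatMaj X X :=
  ⟨1, ⟨fun i j => by by_cases h : i = j <;> simp [one_apply, h], one_mulVec _⟩,
    (Matrix.one_mul X).symm⟩

lemma MatMaj.eq_zero_of_zero_left {n m : ℕ} {Y : Matrix (Fin n) (Fin m) ℝ}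
    (h : MatMaj 0 Y) : Y = 0 := by
  obtain ⟨R, -, rfl⟩ := h
  exact Matrix.mul_zero R

lemma MatMaj.gwMaj {n m : ℕ} {X Y : Matrix (Fin n) (Fin m) ℝ} (h : MatMaj X Y) : GwMaj X Y :=
  let ⟨R, hR, hY⟩ := h
  ⟨R, hR.gRowStochastic, hY⟩

lemma GwMaj.one_add_smul_sub_smul {n m : ℕ} {X Y₁ Y₂ : Matrix (Fin n) (Fin m) ℝ}
    (h₁ : GwMaj X Y₁) (h₂ : GwMaj X Y₂) (t : ℝ) : GwMaj X ((1 + t) • Y₁ - t • Y₂) := by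
  obtain ⟨S, hS, rfl⟩ := h₁
  obtain ⟨E, hE, rfl⟩ := h₂
  exact ⟨_, hS.one_add_smul_sub_smul hE t,
    by rw [Matrix.sub_mul, Matrix.smul_mul, Matrix.smul_mul]⟩

lemma GwMaj.exists_matMaj_eq_one_add_smul_sub_smul {n m : ℕ} {X Y : Matrix (Fin n) (Fin m) ℝ}
    (h : GwMaj X Y) :
    ∃ (t : ℝ) (Y₁ Y₂ : Matrix (Fin n) (Fin m) ℝ),
      MatMaj X Y₁ ∧ MatMaj X Y₂ ∧ Y = (1 + t) • Y₁ - t • Y₂ := by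
  obtain ⟨R, hR, rfl⟩ := h
  obtain ⟨t, S, E, hS, hE, rfl⟩ := hR.exists_rowStochastic_eq_one_add_smul_sub_smul
  exact ⟨t, S * X, E * X, ⟨S, hS, rfl⟩, ⟨E, hE, rfl⟩,
    by rw [Matrix.sub_mul, Matrix.smul_mul, Matrix.smul_mul]⟩

lemma GwMaj.map_of_forall_matMaj_map {n m m' : ℕ}
    (T : Matrix (Fin n) (Fin m) ℝ →ₗ[ℝ] Matrix (Fin n) (Fin m') ℝ)
    (hT : ∀ X Y, MatMaj X Y → MatMaj (T X) (T Y)) {X Y : Matrix (Fin n) (Fin m) ℝ}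
    (h : GwMaj X Y) : GwMaj (T X) (T Y) := by
  obtain ⟨t, Y₁, Y₂, h₁, h₂, rfl⟩ := h.exists_matMaj_eq_one_add_smul_sub_smul
  rw [map_sub, map_smul, map_smul]
  exact (hT _ _ h₁).gwMaj.one_add_smul_sub_smul (hT _ _ h₂).gwMaj t

lemma injective_of_forall_matMaj_iff {n m m' : ℕ}
    (T : Matrix (Fin n) (Fin m) ℝ →ₗ[ℝ] Matrix (Fin n) (Fin m') ℝ)
    (hT : ∀ X Y, MatMaj X Y ↔ MatMaj (T X) (T Y)) : Function.Injective T := by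
  refine (injective_iff_map_eq_zero T).2 fun Z hZ => ?_
  refine ((hT 0 Z).2 ?_).eq_zero_of_zero_left
  rw [map_zero, hZ]
  exact MatMaj.refl 0

theorem stmt_15 {n m : ℕ}
    (T : Matrix (Fin n) (Fin m) ℝ →ₗ[ℝ] Matrix (Fin n) (Fin m) ℝ)
    (hT : ∀ X Y, MatMaj X Y ↔ MatMaj (T X) (T Y)) :
    ∀ X Y, GwMaj X Y ↔ GwMaj (T X) (T Y) := by
  let e := LinearEquiv.ofInjectiveEndo T (injective_of_forall_matMaj_iff T hT)
  have hTe : ∀ U, T (e.symm U) = U := e.apply_symm_apply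
  have he : ∀ U V, MatMaj U V → MatMaj (e.symm U) (e.symm V) := fun U V h =>
    (hT _ _).2 (by rwa [hTe, hTe])
  intro X Y
  refine ⟨GwMaj.map_of_forall_matMaj_map T fun X Y => (hT X Y).1, fun h => ?_⟩
  simpa only [LinearEquiv.coe_coe, e.symm_apply_apply] using
    GwMaj.map_of_forall_matMaj_map e.symm.toLinearMap he (X := e X) (Y := e Y) h
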